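/- arXiv:2506.14410 — 4 statements merged into one kernel-verified Lean document; each statement's English description precedes it below -/
import Mathlib

section
/- For every entire function f : ℂ → ℂ, every z ∈ ℂ with |z| ≤ 1, and every n ∈ ℕ, the n-th derivative satisfies |f^(n)(z)| ≤ n! · e^{3/2} · e^{|z|²/2} · sup_{w ∈ ℂ} |f(w)| e^{-|w|²/2}, provided that supremum is finite. -/
open Complex Real

/-! Cauchy's estimate on the unit circle around `z`, where the Fock bound gives
`|f(w)| ≤ e^{|w|²/2} ‖f‖_∞` and `|w|² ≤ (|z| + 1)² ≤ |z|² + 3` because `|z| ≤ 1`. -/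

theorem norm_le_iSup_mul_exp_sq_div_two {E F : Type*} [SeminormedAddCommGroup E]
    [SeminormedAddCommGroup F] {f : E → F}
    (hbdd : BddAbove (Set.range fun w : E => ‖f w‖ * Real.exp (-(‖w‖) ^ 2 / 2))) (w : E) :
    ‖f w‖ ≤ (⨆ v : E, ‖f v‖ * Real.exp (-(‖v‖) ^ 2 / 2)) * Real.exp (‖w‖ ^ 2 / 2) :=
  calc ‖f w‖ = ‖f w‖ * Real.exp (-(‖w‖) ^ 2 / 2) * Real.exp (‖w‖ ^ 2 / 2) := by
        rw [mul_assoc, ← Real.exp_add, neg_div, neg_add_cancel, Real.exp_zero, mul_one]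
    _ ≤ _ := mul_le_mul_of_nonneg_right (le_ciSup hbdd w) (Real.exp_pos _).le

theorem sq_norm_div_two_le_of_mem_sphere_one {E : Type*} [SeminormedAddCommGroup E] {z w : E}
    (hz : ‖z‖ ≤ 1) (hw : w ∈ Metric.sphere z 1) :
    ‖w‖ ^ 2 / 2 ≤ 3 / 2 + ‖z‖ ^ 2 / 2 := by
  have hwz : ‖w‖ ≤ ‖z‖ + 1 := by
    simpa [mem_sphere_iff_norm.1 hw] using norm_le_norm_add_norm_sub' w z
  nlinarith [norm_nonneg w, norm_nonneg z]

/-- Pointwise derivative estimate on the closed unit disc for entire functions with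
finite Fock growth norm. -/
theorem stmt_0 (f : ℂ → ℂ) (hf : Differentiable ℂ f)
    (hbdd : BddAbove (Set.range fun w : ℂ =>
      ‖f w‖ * Real.exp (-(‖w‖) ^ 2 / 2)))
    (z : ℂ) (hz : ‖z‖ ≤ 1) (n : ℕ) :
    ‖iteratedDeriv n f z‖ ≤
      (n.factorial : ℝ) * Real.exp (3 / 2) * Real.exp ((‖z‖) ^ 2 / 2) *
        ⨆ w : ℂ, ‖f w‖ * Real.exp (-(‖w‖) ^ 2 / 2) := by
  set M := ⨆ w : ℂ, ‖f w‖ * Real.exp (-(‖w‖) ^ 2 / 2)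
  have hM : 0 ≤ M := le_trans (by positivity) (le_ciSup hbdd 0)
  have hsphere : ∀ w ∈ Metric.sphere z 1, ‖f w‖ ≤ M * Real.exp (3 / 2 + ‖z‖ ^ 2 / 2) :=
    fun w hw => (norm_le_iSup_mul_exp_sq_div_two hbdd w).trans <|
      mul_le_mul_of_nonneg_left
        (Real.exp_le_exp.2 (sq_norm_div_two_le_of_mem_sphere_one hz hw)) hM
  calc ‖iteratedDeriv n f z‖ ≤ n.factorial * (M * Real.exp (3 / 2 + ‖z‖ ^ 2 / 2)) / 1 ^ n :=
        norm_iteratedDeriv_le_of_forall_mem_sphere_norm_le n one_pos hf.diffContOnCl hsphere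
    _ = _ := by rw [one_pow, div_one, Real.exp_add]; ring
end

section
/- For every entire function f : ℂ → ℂ, every z ∈ ℂ with |z| > 1, and every n ∈ ℕ, one has |f^(n)(z)| ≤ n! · e^{3/2} · |z|^n · e^{|z|²/2} · sup_{w ∈ ℂ} |f(w)| e^{-|w|²/2}, provided that supremum is finite. -/
open Real

/-!
Apply Cauchy's estimate on the circle of radius `r = ‖z‖⁻¹` about `z`. On that circle
`‖w‖ ≤ ‖z‖ + r`, so `‖w‖² ≤ ‖z‖² + 2‖z‖r + r² ≤ ‖z‖² + 3`, and the Fock bound gives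
`‖f w‖ ≤ M e^{‖z‖²/2 + 3/2}`; dividing by `rⁿ` produces the factor `‖z‖ⁿ`.
-/

lemma sq_norm_le_of_mem_sphere_inv_norm {z w : ℂ} (hz : 1 ≤ ‖z‖)
    (hw : w ∈ Metric.sphere z ‖z‖⁻¹) : ‖w‖ ^ 2 ≤ ‖z‖ ^ 2 + 3 := by
  have hz0 : ‖z‖ ≠ 0 := (zero_lt_one.trans_le hz).ne'
  have hr : ‖z‖⁻¹ ≤ 1 := inv_le_one_of_one_le₀ hz
  have hw' : ‖w‖ ≤ ‖z‖ + ‖z‖⁻¹ := by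
    simpa [mem_sphere_iff_norm.1 hw] using norm_le_norm_add_norm_sub' w z
  calc ‖w‖ ^ 2 ≤ (‖z‖ + ‖z‖⁻¹) ^ 2 := by gcongr
    _ = ‖z‖ ^ 2 + 2 + ‖z‖⁻¹ ^ 2 := by field_simp; ring
    _ ≤ ‖z‖ ^ 2 + 3 := by nlinarith [inv_nonneg.2 (norm_nonneg z)]

lemma norm_le_mul_exp_of_mul_exp_neg_le {a b M : ℝ} (h : a * exp (-b) ≤ M) :
    a ≤ M * exp b := by
  rwa [exp_neg, mul_inv_le_iff₀ (exp_pos b)] at h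

theorem norm_iteratedDeriv_le_of_norm_mul_exp_neg_sq_le {F : Type*} [NormedAddCommGroup F]
    [NormedSpace ℂ F] [CompleteSpace F] {f : ℂ → F} (hf : Differentiable ℂ f) {M : ℝ}
    (hM : ∀ w, ‖f w‖ * exp (-‖w‖ ^ 2 / 2) ≤ M) {z : ℂ} (hz : 1 ≤ ‖z‖) (n : ℕ) :
    ‖iteratedDeriv n f z‖ ≤
      n.factorial * exp (3 / 2) * ‖z‖ ^ n * exp (‖z‖ ^ 2 / 2) * M := by
  have hz0 : 0 < ‖z‖ := zero_lt_one.trans_le hz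
  have hM0 : 0 ≤ M := (by positivity : 0 ≤ ‖f 0‖ * exp (-‖(0 : ℂ)‖ ^ 2 / 2)).trans (hM 0)
  have hsphere : ∀ w ∈ Metric.sphere z ‖z‖⁻¹, ‖f w‖ ≤ M * exp (‖z‖ ^ 2 / 2 + 3 / 2) := by
    intro w hw
    calc ‖f w‖ ≤ M * exp (‖w‖ ^ 2 / 2) :=
          norm_le_mul_exp_of_mul_exp_neg_le (by simpa [neg_div] using hM w)
      _ ≤ M * exp (‖z‖ ^ 2 / 2 + 3 / 2) := by
          gcongr
          linarith [sq_norm_le_of_mem_sphere_inv_norm hz hw]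
  calc ‖iteratedDeriv n f z‖
      ≤ n.factorial * (M * exp (‖z‖ ^ 2 / 2 + 3 / 2)) / ‖z‖⁻¹ ^ n :=
        Complex.norm_iteratedDeriv_le_of_forall_mem_sphere_norm_le n (inv_pos.2 hz0)
          hf.diffContOnCl hsphere
    _ = n.factorial * exp (3 / 2) * ‖z‖ ^ n * exp (‖z‖ ^ 2 / 2) * M := by
        rw [exp_add, inv_pow, div_inv_eq_mul]; ring

/-- Pointwise derivative estimate outside the unit disc for entire functions with
finite Fock growth norm. -/
theorem stmt_1 (f : ℂ → ℂ) (hf : Differentiable ℂ f)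
    (hbdd : BddAbove (Set.range fun w : ℂ =>
      ‖f w‖ * Real.exp (-(‖w‖) ^ 2 / 2)))
    (z : ℂ) (hz : 1 < ‖z‖) (n : ℕ) :
    ‖iteratedDeriv n f z‖ ≤
      (n.factorial : ℝ) * Real.exp (3 / 2) * (‖z‖) ^ n *
        Real.exp ((‖z‖) ^ 2 / 2) *
        ⨆ w : ℂ, ‖f w‖ * Real.exp (-(‖w‖) ^ 2 / 2) :=
  norm_iteratedDeriv_le_of_norm_mul_exp_neg_sq_le hf (le_ciSup hbdd) hz.le n
end

section
/- Combining the two local estimates: for every entire f with finite Fock ∞-norm, every n ∈ ℕ and every z ∈ ℂ, |f^(n)(z)| ≤ n! · e^{3/2} · (1 + |z|)^n · e^{|z|²/2} · sup_{w} |f(w)| e^{-|w|²/2}. -/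
open Complex Real

/-!
Apply Cauchy's estimate on the circle of radius `R = (1 + |z|)⁻¹` about `z`. On that circle
`|w|² ≤ (|z| + R)² ≤ |z|² + 3`, because `|z| R < 1` and `R ≤ 1`, so the Fock bound
`|f(w)| ≤ ‖f‖_∞ e^{|w|²/2}` gives `|f| ≤ e^{3/2} e^{|z|²/2} ‖f‖_∞` there, while `R⁻ⁿ = (1 + |z|)ⁿ`.
-/

noncomputable def fockNorm {E F : Type*} [Norm E] [Norm F] (f : E → F) : ℝ :=
  ⨆ w : E, ‖f w‖ * Real.exp (-‖w‖ ^ 2 / 2)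

theorem norm_le_fockNorm_mul_exp {E F : Type*} [Norm E] [Norm F] {f : E → F}
    (hbdd : BddAbove (Set.range fun w : E => ‖f w‖ * Real.exp (-‖w‖ ^ 2 / 2))) (w : E) :
    ‖f w‖ ≤ fockNorm f * Real.exp (‖w‖ ^ 2 / 2) := by
  have hw : ‖f w‖ * Real.exp (-‖w‖ ^ 2 / 2) ≤ fockNorm f := le_ciSup hbdd w
  calc ‖f w‖ = ‖f w‖ * Real.exp (-‖w‖ ^ 2 / 2) * Real.exp (‖w‖ ^ 2 / 2) := by
        rw [mul_assoc, ← Real.exp_add, neg_div, neg_add_cancel, Real.exp_zero, mul_one]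
    _ ≤ fockNorm f * Real.exp (‖w‖ ^ 2 / 2) := by gcongr

theorem sq_norm_le_of_mem_sphere_inv_one_add {E : Type*} [SeminormedAddCommGroup E] {z w : E}
    (hw : w ∈ Metric.sphere z (1 + ‖z‖)⁻¹) : ‖w‖ ^ 2 ≤ ‖z‖ ^ 2 + 3 := by
  set R := (1 + ‖z‖)⁻¹
  have hz : 0 ≤ ‖z‖ := norm_nonneg z
  have hR : 0 ≤ R := by positivity
  have hR_le_one : R ≤ 1 := inv_le_one_of_one_le₀ (by linarith)
  have hzR : ‖z‖ * R ≤ 1 := by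
    rw [← div_eq_mul_inv, div_le_one (by positivity)]
    linarith
  have hnorm : ‖w‖ ≤ ‖z‖ + R := by
    calc ‖w‖ = ‖z + (w - z)‖ := by rw [add_sub_cancel]
      _ ≤ ‖z‖ + ‖w - z‖ := norm_add_le _ _
      _ = ‖z‖ + R := by rw [← dist_eq_norm, Metric.mem_sphere.mp hw]
  calc ‖w‖ ^ 2 ≤ (‖z‖ + R) ^ 2 := by gcongr
    _ ≤ ‖z‖ ^ 2 + 3 := by nlinarith

/-- Global pointwise derivative estimate for entire functions with finite Fock growth norm. -/
theorem stmt_2 (f : ℂ → ℂ) (hf : Differentiable ℂ f)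
    (hbdd : BddAbove (Set.range fun w : ℂ =>
      ‖f w‖ * Real.exp (-(‖w‖) ^ 2 / 2)))
    (n : ℕ) (z : ℂ) :
    ‖iteratedDeriv n f z‖ ≤
      (n.factorial : ℝ) * Real.exp (3 / 2) * (1 + ‖z‖) ^ n *
        Real.exp ((‖z‖) ^ 2 / 2) *
        ⨆ w : ℂ, ‖f w‖ * Real.exp (-(‖w‖) ^ 2 / 2) := by
  have hsphere : ∀ w ∈ Metric.sphere z (1 + ‖z‖)⁻¹,
      ‖f w‖ ≤ fockNorm f * (Real.exp (3 / 2) * Real.exp (‖z‖ ^ 2 / 2)) := by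
    intro w hw
    refine (norm_le_fockNorm_mul_exp hbdd w).trans (mul_le_mul_of_nonneg_left ?_ ?_)
    · rw [← Real.exp_add, Real.exp_le_exp]
      linarith [sq_norm_le_of_mem_sphere_inv_one_add hw]
    · exact (mul_nonneg (norm_nonneg _) (Real.exp_pos _).le).trans (le_ciSup hbdd 0)
  have hcauchy := norm_iteratedDeriv_le_of_forall_mem_sphere_norm_le n (by positivity)
    hf.diffContOnCl hsphere
  calc ‖iteratedDeriv n f z‖
      ≤ n.factorial * (fockNorm f * (Real.exp (3 / 2) * Real.exp (‖z‖ ^ 2 / 2)))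
          / ((1 + ‖z‖)⁻¹) ^ n := hcauchy
    _ = _ := by rw [inv_pow, div_inv_eq_mul, fockNorm]; ring
end

section
/- Let u, ψ be entire with ψ(z) = az + b, |a| = 1, n ∈ ℕ, and suppose sup_z |u(z)||ψ(z)|^n e^{(|ψ(z)|² − |z|²)/2} < ∞. Then L_{(u,ψ,n)}(z) := |u(z)||ψ(z)|^n e^{(|ψ(z)|² − |z|²)/2} is constant, equal to |b^n u(0)| e^{|b|²/2}, for all z ∈ ℂ. -/
open Complex Real ComplexConjugate

/-! Multiplying `u(z) ψ(z)^n` by the entire factor `exp (a b̄ z)` turns the weight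
`e^{(|ψ(z)|² - |z|²)/2}` into the constant `e^{|b|²/2}`, because
`|az + b|² - |z|² = 2 Re (a b̄ z) + |b|²` when `|a| = 1`. So boundedness of the weighted
quantity makes `u ψ^n exp (a b̄ ·)` a bounded entire function, constant by Liouville, and its
value at `0` is `bⁿ u(0)`. -/

theorem Differentiable.apply_eq_apply_of_forall_norm_le {E : Type*} [NormedAddCommGroup E]
    [NormedSpace ℂ E] {f : ℂ → E} (hf : Differentiable ℂ f) {C : ℝ} (hC : ∀ z, ‖f z‖ ≤ C)
    (z w : ℂ) : f z = f w :=
  hf.apply_eq_apply_of_bounded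
    (isBounded_iff_forall_norm_le.2 ⟨C, by rintro _ ⟨x, rfl⟩; exact hC x⟩) z w

theorem Complex.norm_mul_add_sq_sub_norm_sq {a : ℂ} (ha : ‖a‖ = 1) (b z : ℂ) :
    ‖a * z + b‖ ^ 2 - ‖z‖ ^ 2 = 2 * (a * conj b * z).re + ‖b‖ ^ 2 := by
  have hna : normSq a = 1 := by rw [normSq_eq_norm_sq, ha, one_pow]
  have hre : (a * conj b * z).re = (a * z * conj b).re := by ring_nf
  rw [Complex.sq_norm, Complex.sq_norm, Complex.sq_norm, normSq_add, normSq_mul, hna, hre]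
  ring

theorem Complex.norm_mul_pow_mul_exp_eq {a : ℂ} (ha : ‖a‖ = 1) (b w z : ℂ) (n : ℕ) :
    ‖w‖ * ‖a * z + b‖ ^ n * Real.exp ((‖a * z + b‖ ^ 2 - ‖z‖ ^ 2) / 2)
      = ‖w * (a * z + b) ^ n * cexp (a * conj b * z)‖ * Real.exp (‖b‖ ^ 2 / 2) := by
  rw [norm_mul_add_sq_sub_norm_sq ha, norm_mul, norm_mul, norm_pow, norm_exp,
    mul_assoc _ (Real.exp _), ← Real.exp_add]
  ring_nf

/-- For `ψ(z) = az + b` with `|a| = 1`, if `L_{(u,ψ,n)}` is bounded, then it is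
constant, equal to `|b^n u(0)| e^{|b|²/2}`. -/
theorem stmt_16 (u : ℂ → ℂ) (a b : ℂ) (n : ℕ)
    (hu : Differentiable ℂ u) (ha : ‖a‖ = 1)
    (hbdd : BddAbove (Set.range fun z : ℂ =>
      ‖u z‖ * (‖a * z + b‖) ^ n *
        Real.exp (((‖a * z + b‖) ^ 2 - (‖z‖) ^ 2) / 2))) :
    ∀ z : ℂ,
      ‖u z‖ * (‖a * z + b‖) ^ n *
          Real.exp (((‖a * z + b‖) ^ 2 - (‖z‖) ^ 2) / 2)
        = ‖b ^ n * u 0‖ * Real.exp ((‖b‖) ^ 2 / 2) := by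
  set F : ℂ → ℂ := fun z => u z * (a * z + b) ^ n * cexp (a * conj b * z)
  have hF : Differentiable ℂ F := by fun_prop
  obtain ⟨C, hC⟩ := hbdd
  have hFC : ∀ z, ‖F z‖ ≤ C / Real.exp (‖b‖ ^ 2 / 2) := fun z =>
    (le_div_iff₀ (Real.exp_pos _)).2 (norm_mul_pow_mul_exp_eq ha b (u z) z n ▸ hC ⟨z, rfl⟩)
  intro z
  rw [norm_mul_pow_mul_exp_eq ha b (u z) z n]
  change ‖F z‖ * _ = _
  rw [hF.apply_eq_apply_of_forall_norm_le hFC z 0]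
  simp [F, mul_comm]
end
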